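/- arXiv:2402.15194 — 6 statements merged into one kernel-verified Lean document; each statement's English description precedes it below -/
import Mathlib

section
/- Let q be a probability measure on a measurable space Ω, let α > 0, and let r : Ω → ℝ be measurable with exp(r/α) q-integrable; set C := ∫ exp(r(x)/α) dq(x) and let p_tar be the measure with density exp(r(·)/α)/C with respect to q. If p is a probability measure absolutely continuous with respect to q, with r p-integrable and KL(p‖q) < ∞, and ∫ r dp − α·KL(p‖q) = α·log C, then p = p_tar. -/
/-!
For `p ≪ q` the log-likelihood ratio against the tilted measure `q.tilted f = exp f • q / Z` is
`llr p q - f + log Z`, so `∫ f dp - KL(p‖q) = log Z - KL(p‖q.tilted f)`. The optimal value `log Z`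
is therefore attained exactly when `KL(p‖q.tilted f) = 0`, i.e. (converse Gibbs inequality)
when `p = q.tilted f`. The theorem is the case `f = r / α`, after dividing the hypothesis by `α`.
-/

open MeasureTheory
open scoped Classical

/-- Kullback–Leibler divergence, as an extended real number: it equals
`∫ log (dp/dq) dp` when `p ≪ q` and this integral is well defined, and `+∞` otherwise. -/
noncomputable def KL {Ω : Type*} [MeasurableSpace Ω] (p q : Measure Ω) : EReal :=
  if p ≪ q ∧ Integrable (llr p q) p then ((∫ x, llr p q x ∂p : ℝ) : EReal) else ⊤

section KL

variable {Ω : Type*} [MeasurableSpace Ω] {p q : Measure Ω}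

lemma KL_lt_top_iff : KL p q < ⊤ ↔ p ≪ q ∧ Integrable (llr p q) p := by
  unfold KL
  split_ifs with h
  · exact iff_of_true (EReal.coe_lt_top _) h
  · exact iff_of_false (lt_irrefl _) h

lemma KL_of_ac_of_integrable (h : p ≪ q ∧ Integrable (llr p q) p) :
    KL p q = ((∫ x, llr p q x ∂p : ℝ) : EReal) :=
  if_pos h

end KL

lemma eq_of_integral_llr_eq_zero {Ω : Type*} [MeasurableSpace Ω] {p q : Measure Ω}
    [IsProbabilityMeasure p] [IsProbabilityMeasure q] (hpq : p ≪ q)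
    (hllr : Integrable (llr p q) p) (h : ∫ x, llr p q x ∂p = 0) : p = q := by
  rw [← InformationTheory.klDiv_eq_zero_iff,
    InformationTheory.klDiv_of_ac_of_integrable hpq hllr, h]
  simp

lemma eq_tilted_of_integral_sub_integral_llr_eq_log {Ω : Type*} [MeasurableSpace Ω]
    {p q : Measure Ω} [IsProbabilityMeasure p] [IsProbabilityMeasure q] {f : Ω → ℝ}
    (hpq : p ≪ q) (hllr : Integrable (llr p q) p) (hfp : Integrable f p)
    (hfq : Integrable (fun x ↦ Real.exp (f x)) q)
    (hopt : ∫ x, f x ∂p - ∫ x, llr p q x ∂p = Real.log (∫ x, Real.exp (f x) ∂q)) :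
    p = q.tilted f := by
  have : IsProbabilityMeasure (q.tilted f) := isProbabilityMeasure_tilted hfq
  refine eq_of_integral_llr_eq_zero (hpq.trans (absolutelyContinuous_tilted hfq))
    (integrable_llr_tilted_right hpq hfp hllr hfq) ?_
  rw [integral_llr_tilted_right hpq hfp hfq hllr]
  linarith

theorem gibbs_unique_general {Ω : Type*} [MeasurableSpace Ω]
    (q : Measure Ω) [IsProbabilityMeasure q] (α : ℝ) (hα : 0 < α)
    (r : Ω → ℝ)
    (hexp : Integrable (fun x => Real.exp (r x / α)) q)
    (C : ℝ) (hC : C = ∫ x, Real.exp (r x / α) ∂q)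
    (ptar : Measure Ω)
    (hptar : ptar = q.withDensity fun x => ENNReal.ofReal (Real.exp (r x / α) / C))
    (p : Measure Ω) [IsProbabilityMeasure p]
    (hrp : Integrable r p) (hKL : KL p q < ⊤)
    (hopt : ((∫ x, r x ∂p : ℝ) : EReal) - (α : EReal) * KL p q
        = ((α * Real.log C : ℝ) : EReal)) :
    p = ptar := by
  have hptar_tilted : ptar = q.tilted fun x => r x / α := by
    rw [hptar, Measure.tilted, hC]
  obtain ⟨hpq, hllr⟩ := KL_lt_top_iff.mp hKL
  rw [KL_of_ac_of_integrable ⟨hpq, hllr⟩, ← EReal.coe_mul, ← EReal.coe_sub,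
    EReal.coe_eq_coe_iff] at hopt
  rw [hptar_tilted]
  refine eq_tilted_of_integral_sub_integral_llr_eq_log hpq hllr (hrp.div_const α) hexp ?_
  rw [integral_div, ← hC]
  field_simp
  linarith

/-- Uniqueness half of the Gibbs variational characterization: if a probability measure
`p ≪ q` with `r` `p`-integrable and `KL(p‖q) < ∞` achieves the optimal value
`∫ r dp − α·KL(p‖q) = α·log C`, then `p` is the exponentially tilted measure
`p_tar = exp(r/α)·q/C`. -/
theorem gibbs_unique {Ω : Type*} [MeasurableSpace Ω]
    (q : Measure Ω) [IsProbabilityMeasure q] (α : ℝ) (hα : 0 < α)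
    (r : Ω → ℝ) (hr : Measurable r)
    (hexp : Integrable (fun x => Real.exp (r x / α)) q)
    (C : ℝ) (hC : C = ∫ x, Real.exp (r x / α) ∂q)
    (ptar : Measure Ω)
    (hptar : ptar = q.withDensity fun x => ENNReal.ofReal (Real.exp (r x / α) / C))
    (p : Measure Ω) [IsProbabilityMeasure p] (hpq : p ≪ q)
    (hrp : Integrable r p) (hKL : KL p q < ⊤)
    (hopt : ((∫ x, r x ∂p : ℝ) : EReal) - (α : EReal) * KL p q
        = ((α * Real.log C : ℝ) : EReal)) :
    p = ptar :=
  gibbs_unique_general q α hα r hexp C hC ptar hptar p hrp hKL hopt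
end

section
/- Let μ be a probability measure on a measurable space Ω, let h : Ω → [0,∞) be measurable and μ-integrable with C := ∫ h dμ > 0, and let μ* be the measure with density h/C with respect to μ. Let E be a standard Borel space, let Y : Ω → E be measurable, and let g : E → [0,∞) be measurable such that g ∘ Y is a version of the conditional expectation of h given the σ-algebra generated by Y under μ. Then the pushforward of μ* under Y equals the measure with density g(·)/C with respect to the pushforward of μ under Y. -/
/-!
On a set `Y ⁻¹' s`, which is `σ(Y)`-measurable, the defining property of the conditional
expectation replaces the density `h` by `g ∘ Y`, and the change of variables along `Y` turns
`∫⁻ ω in Y ⁻¹' s, g (Y ω) ∂μ` into `∫⁻ y in s, g y ∂(μ.map Y)`. The constant `1 / C` is a scalar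
that passes through `withDensity` and `map`.
-/

open MeasureTheory

theorem map_withDensity_eq_withDensity_of_condLExp_comap_ae_eq
    {Ω E : Type*} [MeasurableSpace Ω] [MeasurableSpace E] {μ : Measure Ω} {Y : Ω → E}
    (hY : Measurable Y) [SigmaFinite (μ.trim hY.comap_le)] {f : Ω → ENNReal} {g : E → ENNReal}
    (hg : Measurable g) (hcond : μ⁻[f | MeasurableSpace.comap Y inferInstance] =ᵐ[μ] g ∘ Y) :
    (μ.withDensity f).map Y = (μ.map Y).withDensity g := by
  ext s hs
  rw [Measure.map_apply hY hs, withDensity_apply _ (hY hs), withDensity_apply _ hs,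
    setLIntegral_map hs hg hY, ← setLIntegral_condLExp hY.comap_le _ _ ⟨s, hs, rfl⟩]
  exact lintegral_congr_ae (ae_restrict_of_ae hcond)

theorem ofReal_div_const_eq_smul {α : Type*} {f : α → ℝ} (hf : ∀ x, 0 ≤ f x) (c : ℝ) :
    (fun x => ENNReal.ofReal (f x / c)) = ENNReal.ofReal c⁻¹ • fun x => ENNReal.ofReal (f x) := by
  ext x
  rw [div_eq_mul_inv, ENNReal.ofReal_mul (hf x), Pi.smul_apply, smul_eq_mul, mul_comm]

theorem tilted_map_eq_withDensity_condexp_general {Ω E : Type*}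
    [MeasurableSpace Ω] [MeasurableSpace E]
    (μ : Measure Ω) [IsProbabilityMeasure μ]
    (h : Ω → ℝ) (hh0 : ∀ ω, 0 ≤ h ω) (hhint : Integrable h μ)
    (C : ℝ)
    (Y : Ω → E) (hY : Measurable Y)
    (g : E → ℝ) (hg : Measurable g) (hg0 : ∀ y, 0 ≤ g y)
    (hcond : μ[h | MeasurableSpace.comap Y inferInstance] =ᵐ[μ] fun ω => g (Y ω)) :
    (μ.withDensity fun ω => ENNReal.ofReal (h ω / C)).map Y
      = (μ.map Y).withDensity fun y => ENNReal.ofReal (g y / C) := by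
  have hcondL : μ⁻[fun ω => ENNReal.ofReal (h ω) | MeasurableSpace.comap Y inferInstance]
      =ᵐ[μ] (fun y => ENNReal.ofReal (g y)) ∘ Y :=
    (condLExp_ofReal _ hhint (.of_forall hh0)).trans (hcond.fun_comp ENNReal.ofReal)
  rw [ofReal_div_const_eq_smul hh0, ofReal_div_const_eq_smul hg0,
    withDensity_smul' _ _ ENNReal.ofReal_ne_top, Measure.map_smul,
    withDensity_smul _ hg.ennreal_ofReal,
    map_withDensity_eq_withDensity_of_condLExp_comap_ae_eq hY hg.ennreal_ofReal hcondL]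

/-- The marginal of a tilted measure (abstract form of Theorem 1): if `μ*` has density
`h/C` with respect to `μ`, where `C = ∫ h dμ > 0`, and `g ∘ Y` is a version of the
conditional expectation of `h` given `σ(Y)` under `μ`, then the pushforward of `μ*` under
`Y` has density `g/C` with respect to the pushforward of `μ` under `Y`. -/
theorem tilted_map_eq_withDensity_condexp {Ω E : Type*}
    [MeasurableSpace Ω] [MeasurableSpace E] [StandardBorelSpace E]
    (μ : Measure Ω) [IsProbabilityMeasure μ]
    (h : Ω → ℝ) (hh : Measurable h) (hh0 : ∀ ω, 0 ≤ h ω) (hhint : Integrable h μ)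
    (C : ℝ) (hC : C = ∫ ω, h ω ∂μ) (hCpos : 0 < C)
    (Y : Ω → E) (hY : Measurable Y)
    (g : E → ℝ) (hg : Measurable g) (hg0 : ∀ y, 0 ≤ g y)
    (hcond : μ[h | MeasurableSpace.comap Y inferInstance] =ᵐ[μ] fun ω => g (Y ω)) :
    (μ.withDensity fun ω => ENNReal.ofReal (h ω / C)).map Y
      = (μ.map Y).withDensity fun y => ENNReal.ofReal (g y / C) :=
  tilted_map_eq_withDensity_condexp_general μ h hh0 hhint C Y hY g hg hg0 hcond
end

section
/- Let X and Y be measurable spaces, ν a probability measure on X, κ a Markov kernel from X to Y, and h : Y → [0,∞) measurable. Define g(x) := ∫ h dκ(x) and C := ∫ g dν, and assume 0 < C < ∞ and 0 < g(x) < ∞ for every x. Define ν* to be the measure with density g(·)/C with respect to ν, and for each x define κ*(x) to be the measure with density h(·)/g(x) with respect to κ(x). Then κ* is a Markov kernel and the measure with density (x,y) ↦ h(y)/C with respect to ν ⊗ κ equals ν* ⊗ κ*, where ⊗ denotes composition of a measure with a kernel on the product space. -/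
open MeasureTheory ProbabilityTheory
open scoped ENNReal

/-!
Tilting `ν ⊗ₘ κ` by `h(y)/C` factors as tilting by `g(x)/C` on the first coordinate followed by
`h(y)/g(x)` on the second. A density of the first coordinate can be moved inside `ν`, one of both
coordinates inside `κ`, so the tilted law is `ν* ⊗ₘ κ*`; and `κ*` is Markov because `h/g(x)` has
`κ x`-integral one by the very definition of `g`.
-/

section

variable {α β : Type*} {mα : MeasurableSpace α} {mβ : MeasurableSpace β}

namespace MeasureTheory.Measure

lemma withDensity_compProd_left {μ : Measure α} [SFinite μ] {κ : Kernel α β} [IsSFiniteKernel κ]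
    {f : α → ℝ≥0∞} (hf : Measurable f) :
    μ.withDensity f ⊗ₘ κ = (μ ⊗ₘ κ).withDensity (fun p ↦ f p.1) := by
  ext s hs
  rw [compProd_apply hs, lintegral_withDensity_eq_lintegral_mul _ hf
      (Kernel.measurable_kernel_prodMk_left hs), withDensity_apply _ hs,
    ← lintegral_indicator hs, ← Function.comp_def f Prod.fst,
    lintegral_compProd ((hf.comp measurable_fst).indicator hs)]
  refine lintegral_congr fun a ↦ ?_
  rw [Pi.mul_apply, ← lintegral_indicator_const (measurable_prodMk_left hs)]
  rfl

lemma withDensity_compProd_withDensity {μ : Measure α} [SFinite μ] {κ : Kernel α β}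
    [IsSFiniteKernel κ] {f : α → ℝ≥0∞} {k : α → β → ℝ≥0∞} [IsSFiniteKernel (κ.withDensity k)]
    (hf : Measurable f) (hk : Measurable (Function.uncurry k)) :
    μ.withDensity f ⊗ₘ κ.withDensity k = (μ ⊗ₘ κ).withDensity (fun p ↦ f p.1 * k p.1 p.2) := by
  rw [compProd_withDensity hk, withDensity_compProd_left hf]
  exact (withDensity_mul _ (hf.comp measurable_fst) hk).symm

end MeasureTheory.Measure

lemma ProbabilityTheory.Kernel.isMarkovKernel_withDensity {κ : Kernel α β} [IsSFiniteKernel κ]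
    {f : α → β → ℝ≥0∞} (hf : Measurable (Function.uncurry f)) (h_one : ∀ a, ∫⁻ b, f a b ∂κ a = 1) :
    IsMarkovKernel (κ.withDensity f) :=
  ⟨fun a ↦ ⟨by rw [Kernel.withDensity_apply' _ hf, setLIntegral_univ, h_one]⟩⟩

lemma MeasureTheory.lintegral_ofReal_div_integral_self {μ : Measure α} {h : α → ℝ}
    (h_nonneg : ∀ x, 0 ≤ h x) (h_pos : 0 < ∫ x, h x ∂μ) :
    ∫⁻ x, ENNReal.ofReal (h x / ∫ y, h y ∂μ) ∂μ = 1 := by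
  have h_int : Integrable h μ := Integrable.of_integral_ne_zero h_pos.ne'
  rw [← ofReal_integral_eq_lintegral_ofReal (h_int.div_const _)
      (Filter.Eventually.of_forall fun x ↦ div_nonneg (h_nonneg x) h_pos.le),
    integral_div, div_self h_pos.ne', ENNReal.ofReal_one]

end

theorem tilted_compProd_general {X Y : Type*} [MeasurableSpace X] [MeasurableSpace Y]
    (ν : Measure X) [IsProbabilityMeasure ν] (κ : Kernel X Y) [IsMarkovKernel κ]
    (h : Y → ℝ) (hh : Measurable h) (hh0 : ∀ y, 0 ≤ h y)
    (g : X → ℝ) (hg : g = fun x => ∫ y, h y ∂(κ x)) (hgpos : ∀ x, 0 < g x)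
    (C : ℝ) :
    ∃ κstar : Kernel X Y, IsMarkovKernel κstar ∧
      (∀ x, κstar x = (κ x).withDensity fun y => ENNReal.ofReal (h y / g x)) ∧
      (ν ⊗ₘ κ).withDensity (fun p => ENNReal.ofReal (h p.2 / C))
        = (ν.withDensity fun x => ENNReal.ofReal (g x / C)) ⊗ₘ κstar := by
  have hg_meas : Measurable g := hg ▸
    (hh.comp measurable_snd).stronglyMeasurable.integral_kernel_prod_right'.measurable
  set k : X → Y → ℝ≥0∞ := fun x y ↦ ENNReal.ofReal (h y / g x)
  have hk : Measurable (Function.uncurry k) :=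
    ((hh.comp measurable_snd).div (hg_meas.comp measurable_fst)).ennreal_ofReal
  have : IsMarkovKernel (κ.withDensity k) := Kernel.isMarkovKernel_withDensity hk fun x ↦ by
    simpa only [k, hg] using lintegral_ofReal_div_integral_self hh0 (congrFun hg x ▸ hgpos x)
  refine ⟨κ.withDensity k, this, fun x ↦ Kernel.withDensity_apply _ hk x, ?_⟩
  rw [Measure.withDensity_compProd_withDensity (hg_meas.div_const C).ennreal_ofReal hk]
  congr 1
  funext p
  rw [← ENNReal.ofReal_mul' (div_nonneg (hh0 p.2) (hgpos p.1).le),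
    mul_comm, div_mul_div_cancel₀ (hgpos p.1).ne']

/-- Tilting a two-stage law by a function of the second coordinate (abstract form of the
paper's Lemma 3): tilting `ν ⊗ κ` by `h(y)/C` tilts the first marginal by `g/C`, where
`g(x) = ∫ h dκ(x)` and `C = ∫ g dν`, and tilts the conditional law `κ(x)` by `h(·)/g(x)`;
the tilted conditionals form a Markov kernel `κ*` and `(ν ⊗ κ)·(h(y)/C) = ν* ⊗ κ*`. -/
theorem tilted_compProd {X Y : Type*} [MeasurableSpace X] [MeasurableSpace Y]
    (ν : Measure X) [IsProbabilityMeasure ν] (κ : Kernel X Y) [IsMarkovKernel κ]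
    (h : Y → ℝ) (hh : Measurable h) (hh0 : ∀ y, 0 ≤ h y)
    (g : X → ℝ) (hg : g = fun x => ∫ y, h y ∂(κ x)) (hgpos : ∀ x, 0 < g x)
    (C : ℝ) (hC : C = ∫ x, g x ∂ν) (hCpos : 0 < C) :
    ∃ κstar : Kernel X Y, IsMarkovKernel κstar ∧
      (∀ x, κstar x = (κ x).withDensity fun y => ENNReal.ofReal (h y / g x)) ∧
      (ν ⊗ₘ κ).withDensity (fun p => ENNReal.ofReal (h p.2 / C))
        = (ν.withDensity fun x => ENNReal.ofReal (g x / C)) ⊗ₘ κstar :=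
  tilted_compProd_general ν κ h hh hh0 g hg hgpos C
end

section
/- Let μ be a probability measure on a measurable space Ω, let E₁ and E₂ be standard Borel spaces, let X : Ω → E₁ and Y : Ω → E₂ be measurable, let h : Ω → [0,∞) be measurable and μ-integrable with C := ∫ h dμ ∈ (0,∞), and let μ* be the measure with density h/C with respect to μ. Let g : E₂ → [0,∞) be measurable such that g ∘ Y is a version of the conditional expectation of h given σ(Y) under μ, and assume the Markov-type property that the conditional expectation of h given the σ-algebra generated jointly by X and Y equals μ-almost everywhere the conditional expectation of h given σ(Y). Then the pushforward of μ* under ω ↦ (X(ω), Y(ω)) equals the measure with density (x,y) ↦ g(y)/C with respect to the pushforward of μ under ω ↦ (X(ω), Y(ω)). -/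
/-!
Tilting by `h` and pushing forward along `Z = (X, Y)` gives the measure `s ↦ ∫_{Z⁻¹ s} h/C dμ`.
Since `Z⁻¹ s` is `σ(Z)`-measurable, `h` may be replaced there by its conditional expectation
given `σ(Z)`, which by the Markov property is `g ∘ Y`; a function of `Z` integrated over a
preimage under `Z` is an integral against the law of `Z`.
-/

open MeasureTheory

theorem condExp_div_const {Ω : Type*} {m m₀ : MeasurableSpace Ω} {μ : Measure Ω}
    (f : Ω → ℝ) (c : ℝ) : μ[fun ω => f ω / c | m] =ᵐ[μ] fun ω => μ[f | m] ω / c := by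
  simp only [div_eq_inv_mul]
  exact condExp_smul c⁻¹ f m

section LawOfTiltedMeasure

variable {Ω β : Type*} {mΩ : MeasurableSpace Ω} [MeasurableSpace β]
  {μ : Measure Ω} [IsFiniteMeasure μ] {Z : Ω → β} {f : Ω → ℝ} {φ : β → ℝ}

theorem setIntegral_preimage_eq_of_condExp_comap_eq (hZ : Measurable Z)
    (hf : Integrable f μ)
    (hcond : μ[f | MeasurableSpace.comap Z inferInstance] =ᵐ[μ] fun ω => φ (Z ω))
    {s : Set β} (hs : MeasurableSet s) :
    ∫ ω in Z ⁻¹' s, f ω ∂μ = ∫ ω in Z ⁻¹' s, φ (Z ω) ∂μ := by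
  rw [← setIntegral_condExp hZ.comap_le hf ⟨s, hs, rfl⟩]
  exact setIntegral_congr_ae (hZ hs) (hcond.mono fun ω hω _ => hω)

theorem map_withDensity_ofReal_eq_withDensity_of_condExp_comap_eq (hZ : Measurable Z)
    (hf0 : ∀ ω, 0 ≤ f ω) (hf : Integrable f μ) (hφ : Measurable φ)
    (hcond : μ[f | MeasurableSpace.comap Z inferInstance] =ᵐ[μ] fun ω => φ (Z ω)) :
    (μ.withDensity fun ω => ENNReal.ofReal (f ω)).map Z
      = (μ.map Z).withDensity fun b => ENNReal.ofReal (φ b) := by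
  have hφZ_int : Integrable (fun ω => φ (Z ω)) μ := integrable_condExp.congr hcond
  have hφZ_nonneg : 0 ≤ᵐ[μ] fun ω => φ (Z ω) := by
    filter_upwards [hcond, condExp_nonneg (m := MeasurableSpace.comap Z inferInstance)
      (Filter.Eventually.of_forall hf0)] with ω hω hω0
    exact hω ▸ hω0
  ext s hs
  rw [Measure.map_apply hZ hs, withDensity_apply _ (hZ hs), withDensity_apply _ hs,
    setLIntegral_map hs (by fun_prop) hZ,
    ← ofReal_integral_eq_lintegral_ofReal hf.integrableOn (Filter.Eventually.of_forall hf0),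
    ← ofReal_integral_eq_lintegral_ofReal hφZ_int.integrableOn (ae_restrict_of_ae hφZ_nonneg),
    setIntegral_preimage_eq_of_condExp_comap_eq hZ hf hcond hs]

end LawOfTiltedMeasure

theorem tilted_joint_law_general {Ω E₁ E₂ : Type*} [MeasurableSpace Ω]
    [MeasurableSpace E₁] [MeasurableSpace E₂]
    (μ : Measure Ω) [IsProbabilityMeasure μ]
    (X : Ω → E₁) (hX : Measurable X) (Y : Ω → E₂) (hY : Measurable Y)
    (h : Ω → ℝ) (hh0 : ∀ ω, 0 ≤ h ω) (hhint : Integrable h μ)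
    (C : ℝ) (hCpos : 0 < C)
    (g : E₂ → ℝ) (hg : Measurable g)
    (hcond : μ[h | MeasurableSpace.comap Y inferInstance] =ᵐ[μ] fun ω => g (Y ω))
    (hmarkov : μ[h | MeasurableSpace.comap (fun ω => (X ω, Y ω)) inferInstance]
        =ᵐ[μ] μ[h | MeasurableSpace.comap Y inferInstance]) :
    (μ.withDensity fun ω => ENNReal.ofReal (h ω / C)).map (fun ω => (X ω, Y ω))
      = (μ.map fun ω => (X ω, Y ω)).withDensity fun p => ENNReal.ofReal (g p.2 / C) := by
  refine map_withDensity_ofReal_eq_withDensity_of_condExp_comap_eq (hX.prodMk hY)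
    (fun ω => div_nonneg (hh0 ω) hCpos.le) (hhint.div_const C) (by fun_prop) ?_
  filter_upwards [condExp_div_const h C, hmarkov.trans hcond] with ω hω hω'
  rw [hω, hω']

/-- Joint distributions under tilting (abstract form of the paper's Lemma 3): if `μ*` has
density `h/C` with respect to `μ` with `C = ∫ h dμ ∈ (0,∞)`, `g ∘ Y` is a version of the
conditional expectation of `h` given `σ(Y)`, and the conditional expectation of `h` given
the σ-algebra generated jointly by `X` and `Y` agrees μ-a.e. with that given `σ(Y)`
(a Markov-type property), then the joint law of `(X, Y)` under `μ*` has density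
`(x,y) ↦ g(y)/C` with respect to the joint law of `(X, Y)` under `μ`. -/
theorem tilted_joint_law {Ω E₁ E₂ : Type*} [MeasurableSpace Ω]
    [MeasurableSpace E₁] [StandardBorelSpace E₁]
    [MeasurableSpace E₂] [StandardBorelSpace E₂]
    (μ : Measure Ω) [IsProbabilityMeasure μ]
    (X : Ω → E₁) (hX : Measurable X) (Y : Ω → E₂) (hY : Measurable Y)
    (h : Ω → ℝ) (hh : Measurable h) (hh0 : ∀ ω, 0 ≤ h ω) (hhint : Integrable h μ)
    (C : ℝ) (hC : C = ∫ ω, h ω ∂μ) (hCpos : 0 < C)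
    (g : E₂ → ℝ) (hg : Measurable g)
    (hcond : μ[h | MeasurableSpace.comap Y inferInstance] =ᵐ[μ] fun ω => g (Y ω))
    (hmarkov : μ[h | MeasurableSpace.comap (fun ω => (X ω, Y ω)) inferInstance]
        =ᵐ[μ] μ[h | MeasurableSpace.comap Y inferInstance]) :
    (μ.withDensity fun ω => ENNReal.ofReal (h ω / C)).map (fun ω => (X ω, Y ω))
      = (μ.map fun ω => (X ω, Y ω)).withDensity fun p => ENNReal.ofReal (g p.2 / C) :=
  tilted_joint_law_general μ X hX Y hY h hh0 hhint C hCpos g hg hcond hmarkov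
end

section
/- Let d be a positive integer, E := EuclideanSpace ℝ (Fin d), α > 0, σ : ℝ → ℝ, f : ℝ → E → E, and let v : ℝ → E → ℝ be such that (t,x) ↦ v(t,x) is twice continuously differentiable. Suppose that for all (t,x), (σ(t)²/2)·Δ_x v(t,x) + ⟨f(t,x), ∇_x v(t,x)⟩ + ∂_t v(t,x) + (σ(t)²/(2α))·‖∇_x v(t,x)‖² = 0, where ∇_x is the gradient in x, Δ_x is the Laplacian in x (the sum of second partial derivatives along the standard coordinates), and ∂_t is the partial derivative in t. Then w(t,x) := exp(v(t,x)/α) satisfies, for all (t,x), (σ(t)²/2)·Δ_x w(t,x) + ⟨f(t,x), ∇_x w(t,x)⟩ + ∂_t w(t,x) = 0. -/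
/-!
By the chain rule, `w = exp (v / α)` has `∂ₜw = (w/α) ∂ₜv`, `∇ₓw = (w/α) ∇ₓv` and
`Δₓw = (w/α) (Δₓv + ‖∇ₓv‖² / α)`. Hence the Kolmogorov operator applied to `w` is `w/α` times
the left-hand side of the HJB equation: the quadratic gradient term of the HJB equation is
exactly what the second derivative of `exp` produces.
-/

open scoped RealInnerProductSpace

/-- Second partial derivative of `φ : E → ℝ` along the `i`-th standard coordinate. -/
noncomputable def secondPartial {d : ℕ} (φ : EuclideanSpace ℝ (Fin d) → ℝ) (i : Fin d)
    (x : EuclideanSpace ℝ (Fin d)) : ℝ :=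
  fderiv ℝ (fun y => fderiv ℝ φ y (EuclideanSpace.single i 1)) x (EuclideanSpace.single i 1)

/-- Laplacian of `φ : E → ℝ`: the sum of its second partial derivatives along the
standard coordinates. -/
noncomputable def lapl {d : ℕ} (φ : EuclideanSpace ℝ (Fin d) → ℝ)
    (x : EuclideanSpace ℝ (Fin d)) : ℝ :=
  ∑ i, secondPartial φ i x

open Real

section NormedSpace

variable {E : Type*} [NormedAddCommGroup E] [NormedSpace ℝ E] {φ : E → ℝ} (α : ℝ)

theorem hasFDerivAt_exp_div {x : E} (hφ : DifferentiableAt ℝ φ x) :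
    HasFDerivAt (fun y => exp (φ y / α)) ((exp (φ x / α) / α) • fderiv ℝ φ x) x := by
  simpa only [div_eq_mul_inv, smul_smul, mul_comm] using (hφ.hasFDerivAt.mul_const α⁻¹).exp

theorem fderiv_exp_div_apply {x : E} (hφ : DifferentiableAt ℝ φ x) (e : E) :
    fderiv ℝ (fun y => exp (φ y / α)) x e = exp (φ x / α) / α * fderiv ℝ φ x e := by
  rw [(hasFDerivAt_exp_div α hφ).fderiv, smul_apply, smul_eq_mul]

theorem deriv_exp_div {g : ℝ → ℝ} {t : ℝ} (hg : DifferentiableAt ℝ g t) :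
    deriv (fun s => exp (g s / α)) t = exp (g t / α) / α * deriv g t := by
  simpa only [fderiv_apply_one_eq_deriv] using fderiv_exp_div_apply α hg 1

theorem fderiv_fderiv_exp_div_apply (hφ : ContDiff ℝ 2 φ) (x e : E) :
    fderiv ℝ (fun y => fderiv ℝ (fun z => exp (φ z / α)) y e) x e
      = exp (φ x / α) / α * (fderiv ℝ (fun y => fderiv ℝ φ y e) x e + fderiv ℝ φ x e ^ 2 / α) := by
  have hφ₁ : Differentiable ℝ φ := hφ.differentiable two_ne_zero
  have hDφe : DifferentiableAt ℝ (fun y => fderiv ℝ φ y e) x :=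
    ((hφ.fderiv_right one_add_one_eq_two.le).differentiable one_ne_zero x).clm_apply
      (differentiableAt_const e)
  have hfirst : (fun y => fderiv ℝ (fun z => exp (φ z / α)) y e)
      = fun y => exp (φ y / α) * α⁻¹ * fderiv ℝ φ y e := by
    funext y
    rw [fderiv_exp_div_apply α (hφ₁ y), div_eq_mul_inv]
  rw [hfirst, (((hasFDerivAt_exp_div α (hφ₁ x)).mul_const α⁻¹).fun_mul hDφe.hasFDerivAt).fderiv]
  simp only [add_apply, smul_apply, smul_eq_mul]
  ring

end NormedSpace

theorem gradient_exp_div {F : Type*} [NormedAddCommGroup F] [InnerProductSpace ℝ F]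
    [CompleteSpace F] {φ : F → ℝ} (α : ℝ) {x : F} (hφ : DifferentiableAt ℝ φ x) :
    gradient (fun y => exp (φ y / α)) x = (exp (φ x / α) / α) • gradient φ x := by
  simp only [gradient, (hasFDerivAt_exp_div α hφ).fderiv, map_smul]

section Euclidean

variable {d : ℕ}

theorem fderiv_apply_single_eq_gradient_apply (φ : EuclideanSpace ℝ (Fin d) → ℝ)
    (x : EuclideanSpace ℝ (Fin d)) (i : Fin d) :
    fderiv ℝ φ x (EuclideanSpace.single i 1) = gradient φ x i := by
  rw [← inner_gradient_left, EuclideanSpace.inner_single_right]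
  simp

theorem sum_sq_fderiv_apply_single (φ : EuclideanSpace ℝ (Fin d) → ℝ)
    (x : EuclideanSpace ℝ (Fin d)) :
    ∑ i, fderiv ℝ φ x (EuclideanSpace.single i 1) ^ 2 = ‖gradient φ x‖ ^ 2 := by
  simp only [fderiv_apply_single_eq_gradient_apply, EuclideanSpace.real_norm_sq_eq]

theorem lapl_exp_div {φ : EuclideanSpace ℝ (Fin d) → ℝ} (α : ℝ) (hφ : ContDiff ℝ 2 φ)
    (x : EuclideanSpace ℝ (Fin d)) :
    lapl (fun y => exp (φ y / α)) x
      = exp (φ x / α) / α * (lapl φ x + ‖gradient φ x‖ ^ 2 / α) := by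
  simp only [lapl, secondPartial, fderiv_fderiv_exp_div_apply α hφ, Finset.sum_add_distrib,
    ← Finset.mul_sum, ← Finset.sum_div, sum_sq_fderiv_apply_single]

end Euclidean

theorem hopf_cole_exp_general {d : ℕ} (α : ℝ) (σ : ℝ → ℝ)
    (f : ℝ → EuclideanSpace ℝ (Fin d) → EuclideanSpace ℝ (Fin d))
    (v : ℝ → EuclideanSpace ℝ (Fin d) → ℝ)
    (hv : ContDiff ℝ 2 (fun p : ℝ × EuclideanSpace ℝ (Fin d) => v p.1 p.2))
    (hHJB : ∀ (t : ℝ) (x : EuclideanSpace ℝ (Fin d)),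
      (σ t) ^ 2 / 2 * lapl (v t) x + ⟪f t x, gradient (v t) x⟫
        + deriv (fun s => v s x) t
        + (σ t) ^ 2 / (2 * α) * ‖gradient (v t) x‖ ^ 2 = 0) :
    ∀ (t : ℝ) (x : EuclideanSpace ℝ (Fin d)),
      (σ t) ^ 2 / 2 * lapl (fun y => Real.exp (v t y / α)) x
        + ⟪f t x, gradient (fun y => Real.exp (v t y / α)) x⟫
        + deriv (fun s => Real.exp (v s x / α)) t = 0 := by
  intro t x
  have hvt : ContDiff ℝ 2 (v t) := hv.comp (contDiff_const.prodMk contDiff_id)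
  have hvx : DifferentiableAt ℝ (fun s => v s x) t :=
    (hv.comp (contDiff_id.prodMk contDiff_const)).differentiable two_ne_zero t
  rw [lapl_exp_div α hvt, gradient_exp_div α (hvt.differentiable two_ne_zero x),
    real_inner_smul_right, deriv_exp_div α hvx]
  linear_combination exp (v t x / α) / α * hHJB t x

/-- Hopf–Cole transformation (forward direction, the paper's proof of Lemma 2): if `v`
solves the Hamilton–Jacobi–Bellman equation
`(σ²/2)·Δₓv + ⟨f, ∇ₓv⟩ + ∂ₜv + (σ²/(2α))·‖∇ₓv‖² = 0`,
then `w := exp(v/α)` solves the linear backward Kolmogorov equation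
`(σ²/2)·Δₓw + ⟨f, ∇ₓw⟩ + ∂ₜw = 0`. -/
theorem hopf_cole_exp {d : ℕ} (hd : 0 < d) (α : ℝ) (hα : 0 < α) (σ : ℝ → ℝ)
    (f : ℝ → EuclideanSpace ℝ (Fin d) → EuclideanSpace ℝ (Fin d))
    (v : ℝ → EuclideanSpace ℝ (Fin d) → ℝ)
    (hv : ContDiff ℝ 2 (fun p : ℝ × EuclideanSpace ℝ (Fin d) => v p.1 p.2))
    (hHJB : ∀ (t : ℝ) (x : EuclideanSpace ℝ (Fin d)),
      (σ t) ^ 2 / 2 * lapl (v t) x + ⟪f t x, gradient (v t) x⟫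
        + deriv (fun s => v s x) t
        + (σ t) ^ 2 / (2 * α) * ‖gradient (v t) x‖ ^ 2 = 0) :
    ∀ (t : ℝ) (x : EuclideanSpace ℝ (Fin d)),
      (σ t) ^ 2 / 2 * lapl (fun y => Real.exp (v t y / α)) x
        + ⟪f t x, gradient (fun y => Real.exp (v t y / α)) x⟫
        + deriv (fun s => Real.exp (v s x / α)) t = 0 :=
  hopf_cole_exp_general α σ f v hv hHJB
end

section
/- Let d be a positive integer, E := EuclideanSpace ℝ (Fin d), α > 0, σ : ℝ → ℝ, f : ℝ → E → E, and let w : ℝ → E → ℝ be such that (t,x) ↦ w(t,x) is twice continuously differentiable and w(t,x) > 0 for all (t,x). Suppose that for all (t,x), (σ(t)²/2)·Δ_x w(t,x) + ⟨f(t,x), ∇_x w(t,x)⟩ + ∂_t w(t,x) = 0. Then v(t,x) := α·log w(t,x) satisfies, for all (t,x), (σ(t)²/2)·Δ_x v(t,x) + ⟨f(t,x), ∇_x v(t,x)⟩ + ∂_t v(t,x) + (σ(t)²/(2α))·‖∇_x v(t,x)‖² = 0. -/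
open scoped RealInnerProductSpace

/-! For `u = log w` one has `∇u = ∇w / w` and `Δu = Δw / w - ‖∇w‖² / w²`, so the quadratic
term of the Hamilton–Jacobi–Bellman operator cancels the `-‖∇w‖² / w²` and the HJB residual of `u`
is the Kolmogorov residual of `w` divided by `w`. Once the quadratic term carries the factor `1/α`,
the HJB operator is homogeneous of degree one, which passes from `u` to `v = α u`. -/

open Real

section LogDerivatives

variable {E : Type*} [NormedAddCommGroup E] [NormedSpace ℝ E] {φ : E → ℝ} {x : E}

theorem fderiv_const_mul_apply (c : ℝ) (v : E) :
    fderiv ℝ (fun y => c * φ y) x v = c * fderiv ℝ φ x v := by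
  rw [show (fun y => c * φ y) = c • φ from rfl, fderiv_const_smul_field]
  rfl

theorem fderiv_log_apply (hφ : DifferentiableAt ℝ φ x) (hne : φ x ≠ 0) (v : E) :
    fderiv ℝ (fun y => log (φ y)) x v = (φ x)⁻¹ * fderiv ℝ φ x v := by
  rw [fderiv.log hφ hne, smul_apply, smul_eq_mul]

theorem fderiv_fderiv_log_apply (hφ : ContDiff ℝ 2 φ) (hne : ∀ y, φ y ≠ 0) (v : E) :
    fderiv ℝ (fun y => fderiv ℝ (fun z => log (φ z)) y v) x v
      = fderiv ℝ (fun y => fderiv ℝ φ y v) x v / φ x - (fderiv ℝ φ x v / φ x) ^ 2 := by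
  have hinv : HasFDerivAt (fun y => (φ y)⁻¹) ((-(φ x ^ 2)⁻¹) • fderiv ℝ φ x) x :=
    (hasDerivAt_inv (hne x)).comp_hasFDerivAt x (hφ.differentiable two_ne_zero x).hasFDerivAt
  have hdir : HasFDerivAt (fun y => fderiv ℝ φ y v) (fderiv ℝ (fun y => fderiv ℝ φ y v) x) x :=
    (((hφ.fderiv_right le_rfl).clm_apply contDiff_const).differentiable one_ne_zero x).hasFDerivAt
  simp_rw [fderiv_log_apply (hφ.differentiable two_ne_zero _) (hne _)]
  rw [(hinv.fun_mul hdir).fderiv]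
  simp only [add_apply, smul_apply, smul_eq_mul]
  field_simp
  ring

end LogDerivatives

section Gradient

variable {F : Type*} [NormedAddCommGroup F] [InnerProductSpace ℝ F] [CompleteSpace F]
  {φ : F → ℝ} {x : F}

theorem gradient_const_mul (c : ℝ) :
    gradient (fun y => c * φ y) x = c • gradient φ x := by
  rw [gradient, gradient, show (fun y => c * φ y) = c • φ from rfl, fderiv_const_smul_field, Pi.smul_apply,
    map_smul]

theorem gradient_log (hφ : DifferentiableAt ℝ φ x) (hne : φ x ≠ 0) :
    gradient (fun y => log (φ y)) x = (φ x)⁻¹ • gradient φ x := by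
  rw [gradient, gradient, fderiv.log hφ hne, map_smul]

end Gradient

section Laplacian

variable {d : ℕ} {φ : EuclideanSpace ℝ (Fin d) → ℝ} {x : EuclideanSpace ℝ (Fin d)}

theorem gradient_apply_eq_fderiv (i : Fin d) :
    gradient φ x i = fderiv ℝ φ x (EuclideanSpace.single i 1) := by
  rw [gradient, ← InnerProductSpace.toDual_symm_apply, EuclideanSpace.inner_single_right]
  simp

theorem norm_gradient_sq_eq_sum :
    ‖gradient φ x‖ ^ 2 = ∑ i, fderiv ℝ φ x (EuclideanSpace.single i 1) ^ 2 := by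
  simp_rw [EuclideanSpace.norm_sq_eq, Real.norm_eq_abs, sq_abs, gradient_apply_eq_fderiv]

theorem lapl_log (hφ : ContDiff ℝ 2 φ) (hne : ∀ y, φ y ≠ 0) :
    lapl (fun y => log (φ y)) x = lapl φ x / φ x - ‖gradient φ x‖ ^ 2 / φ x ^ 2 := by
  simp_rw [lapl, secondPartial, fderiv_fderiv_log_apply hφ hne, norm_gradient_sq_eq_sum,
    Finset.sum_sub_distrib, Finset.sum_div, div_pow]

theorem lapl_const_mul (c : ℝ) :
    lapl (fun y => c * φ y) x = c * lapl φ x := by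
  simp_rw [lapl, secondPartial, Finset.mul_sum, fderiv_const_mul_apply]

end Laplacian

theorem log_solves_hjb {d : ℕ} (σ : ℝ → ℝ)
    (f : ℝ → EuclideanSpace ℝ (Fin d) → EuclideanSpace ℝ (Fin d))
    (w : ℝ → EuclideanSpace ℝ (Fin d) → ℝ)
    (hw : ContDiff ℝ 2 (fun p : ℝ × EuclideanSpace ℝ (Fin d) => w p.1 p.2))
    (hne : ∀ t x, w t x ≠ 0)
    (hKol : ∀ t x, σ t ^ 2 / 2 * lapl (w t) x + ⟪f t x, gradient (w t) x⟫
        + deriv (fun s => w s x) t = 0) (t : ℝ) (x : EuclideanSpace ℝ (Fin d)) :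
    σ t ^ 2 / 2 * lapl (fun y => log (w t y)) x
        + ⟪f t x, gradient (fun y => log (w t y)) x⟫
        + deriv (fun s => log (w s x)) t
        + σ t ^ 2 / 2 * ‖gradient (fun y => log (w t y)) x‖ ^ 2 = 0 := by
  have hspace : ContDiff ℝ 2 (w t) := hw.comp (contDiff_const.prodMk contDiff_id)
  have htime : ContDiff ℝ 2 (fun s => w s x) := hw.comp (contDiff_id.prodMk contDiff_const)
  rw [lapl_log hspace (hne t), gradient_log (hspace.differentiable two_ne_zero x) (hne t x),
    deriv.log (htime.differentiable two_ne_zero t) (hne t x), real_inner_smul_right, norm_smul,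
    Real.norm_eq_abs, mul_pow, sq_abs]
  linear_combination (w t x)⁻¹ * hKol t x

theorem hopf_cole_log_general {d : ℕ} (α : ℝ) (σ : ℝ → ℝ)
    (f : ℝ → EuclideanSpace ℝ (Fin d) → EuclideanSpace ℝ (Fin d))
    (w : ℝ → EuclideanSpace ℝ (Fin d) → ℝ)
    (hw : ContDiff ℝ 2 (fun p : ℝ × EuclideanSpace ℝ (Fin d) => w p.1 p.2))
    (hwpos : ∀ (t : ℝ) (x : EuclideanSpace ℝ (Fin d)), 0 < w t x)
    (hKol : ∀ (t : ℝ) (x : EuclideanSpace ℝ (Fin d)),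
      (σ t) ^ 2 / 2 * lapl (w t) x + ⟪f t x, gradient (w t) x⟫
        + deriv (fun s => w s x) t = 0) :
    ∀ (t : ℝ) (x : EuclideanSpace ℝ (Fin d)),
      (σ t) ^ 2 / 2 * lapl (fun y => α * Real.log (w t y)) x
        + ⟪f t x, gradient (fun y => α * Real.log (w t y)) x⟫
        + deriv (fun s => α * Real.log (w s x)) t
        + (σ t) ^ 2 / (2 * α) * ‖gradient (fun y => α * Real.log (w t y)) x‖ ^ 2 = 0 := by
  intro t x
  have hlog := log_solves_hjb σ f w hw (fun t x => (hwpos t x).ne') hKol t x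
  rw [lapl_const_mul, gradient_const_mul, deriv_const_mul_field, real_inner_smul_right,
    norm_smul, Real.norm_eq_abs, mul_pow, sq_abs]
  field_simp
  linear_combination 2 * α * hlog

/-- Hopf–Cole transformation (converse direction, the paper's proof of Lemma 2): if a
positive `w` solves the linear backward Kolmogorov equation
`(σ²/2)·Δₓw + ⟨f, ∇ₓw⟩ + ∂ₜw = 0`, then `v := α·log w` solves the
Hamilton–Jacobi–Bellman equation
`(σ²/2)·Δₓv + ⟨f, ∇ₓv⟩ + ∂ₜv + (σ²/(2α))·‖∇ₓv‖² = 0`. -/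
theorem hopf_cole_log {d : ℕ} (hd : 0 < d) (α : ℝ) (hα : 0 < α) (σ : ℝ → ℝ)
    (f : ℝ → EuclideanSpace ℝ (Fin d) → EuclideanSpace ℝ (Fin d))
    (w : ℝ → EuclideanSpace ℝ (Fin d) → ℝ)
    (hw : ContDiff ℝ 2 (fun p : ℝ × EuclideanSpace ℝ (Fin d) => w p.1 p.2))
    (hwpos : ∀ (t : ℝ) (x : EuclideanSpace ℝ (Fin d)), 0 < w t x)
    (hKol : ∀ (t : ℝ) (x : EuclideanSpace ℝ (Fin d)),
      (σ t) ^ 2 / 2 * lapl (w t) x + ⟪f t x, gradient (w t) x⟫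
        + deriv (fun s => w s x) t = 0) :
    ∀ (t : ℝ) (x : EuclideanSpace ℝ (Fin d)),
      (σ t) ^ 2 / 2 * lapl (fun y => α * Real.log (w t y)) x
        + ⟪f t x, gradient (fun y => α * Real.log (w t y)) x⟫
        + deriv (fun s => α * Real.log (w s x)) t
        + (σ t) ^ 2 / (2 * α) * ‖gradient (fun y => α * Real.log (w t y)) x‖ ^ 2 = 0 :=
  hopf_cole_log_general α σ f w hw hwpos hKol
end
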